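/- The solution x* = (I + μL)^{-1} y converges, as μ → ∞, to the orthogonal projection of y onto the kernel of L. -/

import Mathlib

/-! Since `L` is symmetric, `(ker L)ᗮ = range L`, so `y = p + L v` for some `v`. As `(1 + μL)⁻¹`
fixes `ker L`, the error is `(1 + μL)⁻¹ L v = μ⁻¹ (v - (1 + μL)⁻¹ v)`, and `(1 + μL)⁻¹` does not
increase the Euclidean norm, so the error is at most `2‖v‖ / μ`. -/

open Matrix Filter WithLp
open scoped RealInnerProductSpace

namespace Matrix

variable {n : Type*} [Fintype n] [DecidableEq n]

theorem PosSemidef.isUnit_one_add {K : Type*} [Field K] [PartialOrder K] [StarRing K]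
    [StarOrderedRing K] {L : Matrix n n K} (hL : L.PosSemidef) : IsUnit (1 + L) :=
  (PosDef.one.add_posSemidef hL).isUnit

section CommRing

variable {R : Type*} [CommRing R] {L : Matrix n n R}

theorem inv_one_add_mulVec_of_mulVec_eq_zero (hL : IsUnit (1 + L)) {p : n → R}
    (hp : L *ᵥ p = 0) : (1 + L)⁻¹ *ᵥ p = p := by
  have := hL.invertible
  exact inv_mulVec_eq_vec (by rw [add_mulVec, one_mulVec, hp, add_zero])

theorem inv_one_add_mulVec_mulVec (hL : IsUnit (1 + L)) (v : n → R) :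
    (1 + L)⁻¹ *ᵥ (L *ᵥ v) = v - (1 + L)⁻¹ *ᵥ v := by
  have := hL.invertible
  rw [eq_sub_iff_add_eq, ← mulVec_add, inv_mulVec_eq_vec]
  rw [add_mulVec, one_mulVec, add_comm]

end CommRing

theorem PosSemidef.norm_toLp_inv_one_add_mulVec_le {L : Matrix n n ℝ} (hL : L.PosSemidef)
    (x : n → ℝ) : ‖toLp 2 ((1 + L)⁻¹ *ᵥ x)‖ ≤ ‖toLp 2 x‖ := by
  set w := (1 + L)⁻¹ *ᵥ x
  have hx : x = w + L *ᵥ w := by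
    have := hL.isUnit_one_add.invertible
    have h : (1 + L) *ᵥ w = x := by rw [mulVec_mulVec, mul_inv_of_invertible, one_mulVec]
    rwa [add_mulVec, one_mulVec, eq_comm] at h
  have hLw : 0 ≤ w ⬝ᵥ (L *ᵥ w) := by simpa using hL.dotProduct_mulVec_nonneg w
  have key : ‖toLp 2 w‖ ^ 2 ≤ ‖toLp 2 w‖ * ‖toLp 2 x‖ := calc
    ‖toLp 2 w‖ ^ 2 = w ⬝ᵥ w := by
      rw [← real_inner_self_eq_norm_sq, EuclideanSpace.inner_toLp_toLp, star_trivial]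
    _ ≤ w ⬝ᵥ x := by rw [hx, dotProduct_add]; linarith
    _ = ⟪toLp 2 w, toLp 2 x⟫ := by
      rw [EuclideanSpace.inner_toLp_toLp, star_trivial, dotProduct_comm]
    _ ≤ ‖toLp 2 w‖ * ‖toLp 2 x‖ := real_inner_le_norm _ _
  nlinarith [norm_nonneg (toLp 2 w), norm_nonneg (toLp 2 x)]

theorem IsHermitian.exists_mulVec_eq_of_forall_dotProduct_eq_zero {L : Matrix n n ℝ}
    (hL : L.IsHermitian) {q : n → ℝ}
    (hq : ∀ z, L *ᵥ z = 0 → q ⬝ᵥ z = 0) : ∃ v, L *ᵥ v = q := by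
  set T := toEuclideanLin L
  have hrange : (LinearMap.ker T)ᗮ = LinearMap.range T := by
    rw [← (isSymmetric_toEuclideanLin_iff.mpr hL).orthogonal_range,
      Submodule.orthogonal_orthogonal]
  have hq' : toLp 2 q ∈ (LinearMap.ker T)ᗮ := by
    intro z hz
    rw [EuclideanSpace.inner_eq_star_dotProduct, star_trivial]
    exact hq _ (congrArg ofLp hz)
  rw [hrange] at hq'
  obtain ⟨v, hv⟩ := hq'
  exact ⟨ofLp v, congrArg ofLp hv⟩

theorem PosSemidef.norm_toLp_inv_one_add_smul_mulVec_sub_le {L : Matrix n n ℝ}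
    (hL : L.PosSemidef) {p : n → ℝ} (hp : L *ᵥ p = 0) (v : n → ℝ) {μ : ℝ} (hμ : 0 < μ) :
    ‖toLp 2 ((1 + μ • L)⁻¹ *ᵥ (p + L *ᵥ v) - p)‖ ≤ 2 * ‖toLp 2 v‖ / μ := by
  have hμL := hL.smul hμ.le
  have hunit := hμL.isUnit_one_add
  have hsplit : (1 + μ • L)⁻¹ *ᵥ (p + L *ᵥ v) - p = μ⁻¹ • (v - (1 + μ • L)⁻¹ *ᵥ v) := by
    have hμp : (μ • L) *ᵥ p = 0 := by rw [smul_mulVec, hp, smul_zero]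
    rw [mulVec_add, inv_one_add_mulVec_of_mulVec_eq_zero hunit hμp,
      ← inv_one_add_mulVec_mulVec hunit, smul_mulVec, mulVec_smul, smul_smul,
      inv_mul_cancel₀ hμ.ne', one_smul, add_sub_cancel_left]
  calc ‖toLp 2 ((1 + μ • L)⁻¹ *ᵥ (p + L *ᵥ v) - p)‖
      = μ⁻¹ * ‖toLp 2 v - toLp 2 ((1 + μ • L)⁻¹ *ᵥ v)‖ := by
        rw [hsplit, toLp_smul, toLp_sub, norm_smul, Real.norm_of_nonneg (inv_nonneg.2 hμ.le)]
    _ ≤ μ⁻¹ * (‖toLp 2 v‖ + ‖toLp 2 v‖) := by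
        gcongr
        exact (norm_sub_le _ _).trans
          (add_le_add_right (hμL.norm_toLp_inv_one_add_mulVec_le v) _)
    _ = 2 * ‖toLp 2 v‖ / μ := by ring

end Matrix

theorem qp_solution_tendsto_kernel_projection {m : ℕ}
    (L : Matrix (Fin m) (Fin m) ℝ) (hL : L.PosSemidef)
    (y p : Fin m → ℝ)
    (hp_ker : L *ᵥ p = 0)
    (hp_orth : ∀ z : Fin m → ℝ, L *ᵥ z = 0 → (y - p) ⬝ᵥ z = 0) :
    Tendsto (fun μ : ℝ => (1 + μ • L)⁻¹ *ᵥ y) atTop (nhds p) := by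
  obtain ⟨v, hv⟩ := hL.isHermitian.exists_mulVec_eq_of_forall_dotProduct_eq_zero hp_orth
  have hy : y = p + L *ᵥ v := by rw [hv, add_sub_cancel]
  have hbound : Tendsto (fun μ : ℝ => 2 * ‖toLp 2 v‖ / μ) atTop (nhds 0) :=
    tendsto_const_nhds.div_atTop tendsto_id
  have hEuclid : Tendsto (fun μ : ℝ => toLp 2 ((1 + μ • L)⁻¹ *ᵥ y)) atTop (nhds (toLp 2 p)) := by
    rw [tendsto_iff_norm_sub_tendsto_zero]
    refine squeeze_zero' (.of_forall fun _ => norm_nonneg _) ?_ hbound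
    filter_upwards [eventually_gt_atTop 0] with μ hμ
    rw [← toLp_sub, hy]
    exact hL.norm_toLp_inv_one_add_smul_mulVec_sub_le hp_ker v hμ
  exact ((PiLp.continuous_ofLp 2 _).tendsto _).comp hEuclid
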